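/- Let A = k[x]/(x²) with Koszul resolution P as above (generators e_i, differential by alternating multiplication by u and v). Define α₀: P → A by α₀(e₁) = x and α₀(e_i) = 0 for i ≠ 1, and α₁: P → P by α₁(e_i) = −i e_i. Then: (1) α₀ is a chain map of the appropriate degree (a Hochschild 1-cocycle), and (2) α₁ satisfies the coderivation equation ∂(α₁) = −(α₀⊗_A 1 + 1⊗_A α₀)δ₂, where ∂ is the differential on Hom and δ₂(e_i) = Σ_{j+l=i}(−1)^j e_j⊗_A e_l. -/
import Mathlib


open TensorProduct DirectSum

set_option synthInstance.maxHeartbeats 1000000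
set_option maxHeartbeats 2000000

namespace Stmt10

variable (k : Type*) [Field k]

/-- The algebra `A = k[x]/(x²)`. -/
abbrev A : Type _ := Polynomial k ⧸ Ideal.span {(Polynomial.X : Polynomial k) ^ 2}

/-- The class of `x`. -/
noncomputable def x : A k := Ideal.Quotient.mk _ Polynomial.X

/-- `A ⊗ A`, the free rank one `A`-bimodule. -/
abbrev T2 : Type _ := A k ⊗[k] A k

/-- `A ⊗ A ⊗ A`, the underlying bimodule of `(A⊗A) ⊗_A (A⊗A)`. -/
abbrev T3 : Type _ := A k ⊗[k] (A k ⊗[k] A k)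

noncomputable instance : CommRing (T2 k) := inferInstance
noncomputable instance : Algebra k (T2 k) := inferInstance
noncomputable instance : CommRing (T3 k) := inferInstance
noncomputable instance : Algebra k (T3 k) := inferInstance

/-- `u = x⊗1 − 1⊗x`. -/
noncomputable def u : T2 k := x k ⊗ₜ[k] 1 - 1 ⊗ₜ[k] x k

/-- `v = x⊗1 + 1⊗x`. -/
noncomputable def v : T2 k := x k ⊗ₜ[k] 1 + 1 ⊗ₜ[k] x k

/-- The element by which the differential `d(e_i) = e_{i−1}·w i` multiplies:
out of an odd-indexed generator it is `u`, out of an even-indexed one it is `v`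
(so that the resolution ends `⋯ →·v A⊗A →·u A⊗A →μ A`). -/
noncomputable def w (i : ℕ) : T2 k := if Odd i then u k else v k

/-- The shifted 2-periodic Koszul resolution `P = ⊕_{i∈ℕ} (A⊗A)·e_i`. -/
abbrev M : Type _ := ⨁ _i : ℕ, T2 k

/-- `P ⊗_A P = ⊕_{(j,l)} (A⊗A⊗A)·(e_j ⊗ e_l)`. -/
abbrev N : Type _ := ⨁ _p : ℕ × ℕ, T3 k

/-- The differential of `P`: `e_i ↦ e_{i−1} · w i`. -/
noncomputable def dP : M k →ₗ[k] M k :=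
  DirectSum.toModule k ℕ (M k) fun i =>
    match i with
    | 0 => 0
    | (j + 1) =>
        (DirectSum.lof k ℕ (fun _ => T2 k) j) ∘ₗ LinearMap.mulRight k (w k (j + 1))

/-- The bimodule map `A⊗A → A⊗A⊗A`, `a⊗b ↦ a⊗1⊗b` (i.e. `a e_j ⊗_A e_l b`). -/
noncomputable def ι13 : T2 k →ₗ[k] T3 k :=
  TensorProduct.map LinearMap.id ((TensorProduct.mk k (A k) (A k)) 1)

/-- The diagonal `δ₂ : P → P ⊗_A P`, `δ₂(e_i) = Σ_{j+l=i} (−1)^j e_j ⊗_A e_l`. -/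
noncomputable def δ₂ : M k →ₗ[k] N k :=
  DirectSum.toModule k ℕ (N k) fun i =>
    ∑ j ∈ Finset.range (i + 1),
      ((-1 : ℤ) ^ j) •
        ((DirectSum.lof k (ℕ × ℕ) (fun _ => T3 k) (j, i - j)) ∘ₗ ι13 k)

/-- The Hochschild 1-cocycle `α₀ : P → A` with `α₀(e₁) = x` (the derivation
`x ∂/∂x`), `α₀(e_i) = 0` for `i ≠ 1`; on `a e₁ b` it takes the value `a x b`. -/
noncomputable def alpha0 : M k →ₗ[k] A k :=
  DirectSum.toModule k ℕ (A k) fun i =>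
    if i = 1 then
      (LinearMap.mul' k (A k)) ∘ₗ LinearMap.mulRight k (x k ⊗ₜ[k] (1 : A k))
    else 0

/-- `α₁ : P → P`, `α₁(e_i) = −i e_i`. -/
noncomputable def alpha1 : M k →ₗ[k] M k :=
  DirectSum.toModule k ℕ (M k) fun i =>
    (-(i : ℤ)) • DirectSum.lof k ℕ (fun _ => T2 k) i

/-- Collapse of the first two slots of `A⊗A⊗A` with an `x` inserted:
`a⊗(m⊗b) ↦ (a·x·m)⊗b`.  This is the component of `α₀ ⊗_A 1` on `e₁ ⊗ e_l`. -/
noncomputable def c12x : T3 k →ₗ[k] T2 k :=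
  TensorProduct.map
      ((LinearMap.mul' k (A k)) ∘ₗ LinearMap.mulRight k (x k ⊗ₜ[k] (1 : A k)))
      LinearMap.id ∘ₗ
    (TensorProduct.assoc k (A k) (A k) (A k)).symm.toLinearMap

/-- Collapse of the last two slots of `A⊗A⊗A` with an `x` inserted:
`a⊗(m⊗b) ↦ a⊗(m·x·b)`.  This is the component of `1 ⊗_A α₀` on `e_j ⊗ e₁`. -/
noncomputable def c23x : T3 k →ₗ[k] T2 k :=
  TensorProduct.map LinearMap.id
    ((LinearMap.mul' k (A k)) ∘ₗ LinearMap.mulRight k (x k ⊗ₜ[k] (1 : A k)))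

/-- `α₀ ⊗_A 1 : P ⊗_A P → P`: nonzero only on components `e₁ ⊗ e_l`. -/
noncomputable def A01 : N k →ₗ[k] M k :=
  DirectSum.toModule k (ℕ × ℕ) (M k) fun p =>
    match p with
    | (1, l) => (DirectSum.lof k ℕ (fun _ => T2 k) l) ∘ₗ c12x k
    | _ => 0

/-- `1 ⊗_A α₀ : P ⊗_A P → P`: nonzero only on components `e_j ⊗ e₁`
(the Koszul sign `(−1)^{|α₀|·deg e_j}` is `+1` since `α₀` corresponds to a
coderivation component of even internal degree). -/
noncomputable def A10 : N k →ₗ[k] M k :=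
  DirectSum.toModule k (ℕ × ℕ) (M k) fun p =>
    match p with
    | (j, 1) => (DirectSum.lof k ℕ (fun _ => T2 k) j) ∘ₗ c23x k
    | _ => 0

lemma xsq : x k * x k = 0 := by
  have h : x k * x k = Ideal.Quotient.mk _ ((Polynomial.X : Polynomial k)^2) := by
    rw [x, ← map_mul, ← sq]
  rw [h, Ideal.Quotient.eq_zero_iff_mem]
  exact Ideal.subset_span rfl

lemma dP_lof_zero (m : T2 k) : dP k (DirectSum.lof k ℕ (fun _ => T2 k) 0 m) = 0 := by
  simp [dP, DirectSum.toModule_lof]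

lemma dP_lof_succ (j : ℕ) (m : T2 k) :
    dP k (DirectSum.lof k ℕ (fun _ => T2 k) (j + 1) m) =
      DirectSum.lof k ℕ (fun _ => T2 k) j (m * w k (j + 1)) := by
  simp [dP, DirectSum.toModule_lof]

lemma alpha0_lof (i : ℕ) (m : T2 k) :
    alpha0 k (DirectSum.lof k ℕ (fun _ => T2 k) i m) =
      if i = 1 then LinearMap.mul' k (A k) (m * (x k ⊗ₜ[k] (1 : A k))) else 0 := by
  rw [alpha0, DirectSum.toModule_lof]
  split <;> simp

lemma alpha1_lof (i : ℕ) (m : T2 k) :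
    alpha1 k (DirectSum.lof k ℕ (fun _ => T2 k) i m) =
      (-(i : ℤ)) • DirectSum.lof k ℕ (fun _ => T2 k) i m := by
  rw [alpha1, DirectSum.toModule_lof]; rfl

lemma A01_lof (p : ℕ × ℕ) (t : T3 k) :
    A01 k (DirectSum.lof k (ℕ × ℕ) (fun _ => T3 k) p t) =
      if p.1 = 1 then DirectSum.lof k ℕ (fun _ => T2 k) p.2 (c12x k t) else 0 := by
  obtain ⟨j, l⟩ := p
  rw [A01, DirectSum.toModule_lof]
  match j with
  | 0 => simp
  | 1 => simp
  | (n+2) => simp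

lemma A10_lof (p : ℕ × ℕ) (t : T3 k) :
    A10 k (DirectSum.lof k (ℕ × ℕ) (fun _ => T3 k) p t) =
      if p.2 = 1 then DirectSum.lof k ℕ (fun _ => T2 k) p.1 (c23x k t) else 0 := by
  obtain ⟨j, l⟩ := p
  rw [A10, DirectSum.toModule_lof]
  match l with
  | 0 => simp
  | 1 => simp
  | (n+2) => simp

lemma delta2_lof (i : ℕ) (m : T2 k) :
    δ₂ k (DirectSum.lof k ℕ (fun _ => T2 k) i m) =
      ∑ j ∈ Finset.range (i + 1),
        ((-1 : ℤ) ^ j) •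
          DirectSum.lof k (ℕ × ℕ) (fun _ => T3 k) (j, i - j) (ι13 k m) := by
  rw [δ₂, DirectSum.toModule_lof]
  simp [LinearMap.sum_apply]

lemma c12x_iota (a b : A k) :
    c12x k (ι13 k (a ⊗ₜ[k] b)) = (a * x k) ⊗ₜ[k] b := by
  simp [c12x, ι13, Algebra.TensorProduct.tmul_mul_tmul]

lemma c23x_iota (a b : A k) :
    c23x k (ι13 k (a ⊗ₜ[k] b)) = a ⊗ₜ[k] (b * x k) := by
  simp [c23x, ι13, Algebra.TensorProduct.tmul_mul_tmul, mul_comm]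

/-- (1) `α₀` (with `α₀(e₁) = x`) is a chain map, i.e. a Hochschild
1-cocycle; (2) `α₁(e_i) = −i e_i` satisfies the coderivation equation
`∂(α₁) = (α₀ ⊗_A 1 + 1 ⊗_A α₀) δ₂`, exhibiting `(α₀, α₁)` as the first two
components of an `A_∞`-coderivation lifting `α₀`. -/
theorem stmt10 :
    alpha0 k ∘ₗ dP k = 0 ∧
    dP k ∘ₗ alpha1 k - alpha1 k ∘ₗ dP k = (A01 k + A10 k) ∘ₗ δ₂ k := by
  constructor
  · apply DirectSum.linearMap_ext
    intro i
    apply TensorProduct.ext'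
    intro a b
    simp only [LinearMap.comp_apply, LinearMap.zero_apply]
    match i with
    | 0 => rw [dP_lof_zero]; simp
    | 1 => rw [dP_lof_succ, alpha0_lof]; simp
    | 2 =>
        rw [dP_lof_succ, alpha0_lof]
        rw [if_pos rfl]
        have hw : w k 2 = v k := by
          rw [w, if_neg (by decide : ¬ Odd 2)]
        rw [hw, v]
        simp only [mul_add, add_mul, Algebra.TensorProduct.tmul_mul_tmul, map_add,
          LinearMap.mul'_apply, mul_one, one_mul]
        linear_combination (a * b + a * b) * xsq k
    | (n+3) => rw [dP_lof_succ, alpha0_lof, if_neg (by omega)]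
  · apply DirectSum.linearMap_ext
    intro i
    apply TensorProduct.ext'
    intro a b
    simp only [LinearMap.comp_apply, LinearMap.sub_apply, LinearMap.add_apply]
    match i with
    | 0 =>
        rw [alpha1_lof, dP_lof_zero, delta2_lof]
        simp [dP_lof_zero, A01_lof, A10_lof]
    | (n+1) =>
        rw [alpha1_lof, map_zsmul, dP_lof_succ, alpha1_lof, delta2_lof]
        simp only [map_sum, map_zsmul, A01_lof, A10_lof]
        have h1a : ∑ j ∈ Finset.range (n + 2),
            ((-1 : ℤ) ^ j) •
              (if (j, n + 1 - j).1 = 1 then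
                  DirectSum.lof k ℕ (fun _ => T2 k) (j, n + 1 - j).2
                    (c12x k (ι13 k (a ⊗ₜ[k] b))) else 0) =
            (-(DirectSum.lof k ℕ (fun _ => T2 k) n ((a * x k) ⊗ₜ[k] b))) := by
          rw [Finset.sum_eq_single 1]
          · simp [c12x_iota]
          · intro j _ hj
            rw [if_neg (by simpa using hj), smul_zero]
          · intro h
            exact absurd (Finset.mem_range.mpr (by omega)) h
        have h1b : ∑ j ∈ Finset.range (n + 2),
            ((-1 : ℤ) ^ j) •
              (if (j, n + 1 - j).2 = 1 then
                  DirectSum.lof k ℕ (fun _ => T2 k) (j, n + 1 - j).1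
                    (c23x k (ι13 k (a ⊗ₜ[k] b))) else 0) =
            ((-1 : ℤ) ^ n) • DirectSum.lof k ℕ (fun _ => T2 k) n (a ⊗ₜ[k] (b * x k)) := by
          rw [Finset.sum_eq_single n]
          · rw [if_pos (by simp)]
            simp [c23x_iota]
          · intro j hj hjn
            rw [if_neg (by simp at hj ⊢; omega), smul_zero]
          · intro h
            exact absurd (Finset.mem_range.mpr (by omega)) h
        rw [h1a, h1b]
        have h2 : ∀ z : M k, (-(((n : ℕ) + 1 : ℕ) : ℤ)) • z - (-((n : ℕ) : ℤ)) • z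
            = -z := by
          intro z
          rw [← sub_smul]
          have : (-(((n : ℕ) + 1 : ℕ) : ℤ)) - (-((n : ℕ) : ℤ)) = -1 := by
            push_cast; ring
          rw [this, neg_one_zsmul]
        rw [h2, ← map_neg, ← map_neg, ← map_zsmul, ← map_add]
        congr 1
        rcases Nat.even_or_odd n with hn | hn
        · rw [w, if_pos hn.add_one, u, hn.neg_one_pow, one_smul]
          simp only [mul_sub, Algebra.TensorProduct.tmul_mul_tmul, mul_one, one_mul]
          abel
        · rw [w, if_neg (by rw [Nat.not_odd_iff_even]; exact hn.add_one), v,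
            hn.neg_one_pow, neg_one_zsmul]
          simp only [mul_add, Algebra.TensorProduct.tmul_mul_tmul, mul_one, one_mul]
          abel


end Stmt10
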